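/- Let (ψ₁,θ₁) and (ψ₂,θ₂) be pairs of C² functions on the closure of Ω, each vanishing on ∂Ω, each solving −Δψᵢ − R_a·∂ₓθᵢ = f₁ and J(ψᵢ,θᵢ) = Δθᵢ + f₂ pointwise on Ω for some R_a > 0 and continuous f₁, f₂. Set ψ̄ = ψ₁ − ψ₂ and θ̄ = θ₁ − θ₂. Then ‖∇ψ̄‖₂² + ‖∇θ̄‖₂² − R_a·∫_Ω (∂ₓθ̄)·ψ̄ + ∫_Ω [J(ψ₁,θ₁) − J(ψ₂,θ₂)]·θ̄ = 0. -/

import Mathlib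

/-!
Subtracting the equations of the two solutions, `ψ̄` and `θ̄` satisfy `Δψ̄ = -Ra ∂ₓθ̄` and
`Δθ̄ = J(ψ₁,θ₁) - J(ψ₂,θ₂)` in `Ω`. Multiplying by `ψ̄`, resp. `θ̄`, and integrating, the identity
follows from Green's first identity `∫_Ω |∇u|² = -∫_Ω u Δu` for `C²` functions vanishing on `∂Ω`,
which is the divergence theorem on the rectangle applied to the field `u ∇u`.
-/

open MeasureTheory Real Set Filter

noncomputable section

/-- The open unit square Ω = (0,1) × (0,1) in ℝ². -/
def Omg : Set (ℝ × ℝ) := Ioo (0:ℝ) 1 ×ˢ Ioo (0:ℝ) 1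

/-- Partial derivative in the x-direction. -/
def px (f : ℝ × ℝ → ℝ) (p : ℝ × ℝ) : ℝ := fderiv ℝ f p (1, 0)

/-- Partial derivative in the y-direction. -/
def py (f : ℝ × ℝ → ℝ) (p : ℝ × ℝ) : ℝ := fderiv ℝ f p (0, 1)

/-- Laplacian. -/
def lap (f : ℝ × ℝ → ℝ) (p : ℝ × ℝ) : ℝ := px (px f) p + py (py f) p

/-- Jacobian determinant J(ψ,θ) = ∂ₓψ·∂_yθ − ∂_yψ·∂ₓθ. -/
def Jac (ψ θ : ℝ × ℝ → ℝ) (p : ℝ × ℝ) : ℝ := px ψ p * py θ p - py ψ p * px θ p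

/-- The L^q norm over Ω: ‖f‖_q = (∫_Ω |f|^q)^(1/q). -/
def Lnorm (f : ℝ × ℝ → ℝ) (q : ℝ) : ℝ := (∫ p in Omg, |f p| ^ q) ^ (1 / q)

/-- ‖∇f‖₂ = (∫_Ω (|∂ₓf|² + |∂_yf|²))^(1/2). -/
def gradNorm (f : ℝ × ℝ → ℝ) : ℝ :=
  (∫ p in Omg, (|px f p| ^ 2 + |py f p| ^ 2)) ^ ((1:ℝ) / 2)

open Topology

section DerivWithin

variable {E F : Type*} [NormedAddCommGroup E] [NormedSpace ℝ E]
  [NormedAddCommGroup F] [NormedSpace ℝ F] {f : E → F} {s U : Set E}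

theorem fderivWithin_apply_eqOn (hU : IsOpen U) (hUs : U ⊆ s) (v : E) :
    EqOn (fun p => fderivWithin ℝ f s p v) (fun p => fderiv ℝ f p v) U := fun p hp => by
  simp only [fderivWithin_of_mem_nhds (mem_of_superset (hU.mem_nhds hp) hUs)]

theorem fderivWithin_apply_fderivWithin_apply_eqOn (hU : IsOpen U) (hUs : U ⊆ s) (v w : E) :
    EqOn (fun p => fderivWithin ℝ (fun q => fderivWithin ℝ f s q v) s p w)
      (fun p => fderiv ℝ (fun q => fderiv ℝ f q v) p w) U := fun p hp => by
  have hev : (fun q => fderivWithin ℝ f s q v) =ᶠ[𝓝 p] fun q => fderiv ℝ f q v :=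
    eventually_of_mem (hU.mem_nhds hp) (fderivWithin_apply_eqOn hU hUs v)
  simp only [fderivWithin_apply_eqOn hU hUs w hp, hev.fderiv_eq]

theorem ContDiffOn.fderivWithin_apply {m n : WithTop ℕ∞} (hf : ContDiffOn ℝ n f s)
    (hs : UniqueDiffOn ℝ s) (hmn : m + 1 ≤ n) (v : E) :
    ContDiffOn ℝ m (fun p => fderivWithin ℝ f s p v) s :=
  (hf.fderivWithin hs hmn).clm_apply contDiffOn_const

end DerivWithin

theorem ContinuousOn.integrableOn_of_eqOn {X : Type*} [TopologicalSpace X] [MeasurableSpace X]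
    [OpensMeasurableSpace X] {μ : Measure X} [IsFiniteMeasureOnCompacts μ] {f g : X → ℝ}
    {K U : Set X} (hg : ContinuousOn g K) (hK : IsCompact K) (hU : MeasurableSet U)
    (hUK : U ⊆ K) (hfg : EqOn g f U) : IntegrableOn f U μ :=
  (hg.integrableOn_of_subset_isCompact hK hU hUK
    ((measure_mono hUK).trans_lt hK.measure_lt_top).ne).congr_fun hfg hU

section PartialDerivatives

variable {f g : ℝ × ℝ → ℝ} {p : ℝ × ℝ}

theorem Filter.EventuallyEq.px_eq (h : f =ᶠ[𝓝 p] g) : px f p = px g p := by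
  rw [px, px, h.fderiv_eq]

theorem Filter.EventuallyEq.py_eq (h : f =ᶠ[𝓝 p] g) : py f p = py g p := by
  rw [py, py, h.fderiv_eq]

theorem px_sub (hf : DifferentiableAt ℝ f p) (hg : DifferentiableAt ℝ g p) :
    px (fun q => f q - g q) p = px f p - px g p := by
  rw [px, fderiv_fun_sub hf hg]; rfl

theorem py_sub (hf : DifferentiableAt ℝ f p) (hg : DifferentiableAt ℝ g p) :
    py (fun q => f q - g q) p = py f p - py g p := by
  rw [py, fderiv_fun_sub hf hg]; rfl

theorem px_mul (hf : DifferentiableAt ℝ f p) (hg : DifferentiableAt ℝ g p) :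
    px (fun q => f q * g q) p = px f p * g p + f p * px g p := by
  rw [px, fderiv_fun_mul hf hg]
  simp only [px, add_apply, FunLike.coe_smul, Pi.smul_apply, smul_eq_mul]
  ring

theorem py_mul (hf : DifferentiableAt ℝ f p) (hg : DifferentiableAt ℝ g p) :
    py (fun q => f q * g q) p = py f p * g p + f p * py g p := by
  rw [py, fderiv_fun_mul hf hg]
  simp only [py, add_apply, FunLike.coe_smul, Pi.smul_apply, smul_eq_mul]
  ring

theorem ContDiffAt.differentiableAt_px (hf : ContDiffAt ℝ 2 f p) :
    DifferentiableAt ℝ (px f) p :=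
  ((hf.fderiv_right (m := 1) le_rfl).clm_apply contDiffAt_const).differentiableAt one_ne_zero

theorem ContDiffAt.differentiableAt_py (hf : ContDiffAt ℝ 2 f p) :
    DifferentiableAt ℝ (py f) p :=
  ((hf.fderiv_right (m := 1) le_rfl).clm_apply contDiffAt_const).differentiableAt one_ne_zero

theorem lap_sub (hf : ContDiffAt ℝ 2 f p) (hg : ContDiffAt ℝ 2 g p) :
    lap (fun q => f q - g q) p = lap f p - lap g p := by
  have hdiff : ∀ᶠ q in 𝓝 p, DifferentiableAt ℝ f q ∧ DifferentiableAt ℝ g q :=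
    (hf.eventually (by simp)).and (hg.eventually (by simp)) |>.mono fun q hq =>
      ⟨hq.1.differentiableAt (by simp), hq.2.differentiableAt (by simp)⟩
  have hx : px (fun q => f q - g q) =ᶠ[𝓝 p] fun q => px f q - px g q :=
    hdiff.mono fun q hq => px_sub hq.1 hq.2
  have hy : py (fun q => f q - g q) =ᶠ[𝓝 p] fun q => py f q - py g q :=
    hdiff.mono fun q hq => py_sub hq.1 hq.2
  rw [lap, lap, lap, hx.px_eq, hy.py_eq, px_sub hf.differentiableAt_px hg.differentiableAt_px,
    py_sub hf.differentiableAt_py hg.differentiableAt_py]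
  ring

end PartialDerivatives

section IntegrableOn

variable {K U : Set (ℝ × ℝ)} {u : ℝ × ℝ → ℝ}

theorem ContDiffOn.integrableOn_sq_px_add_sq_py (hu : ContDiffOn ℝ 2 u K) (hK : IsCompact K)
    (hKd : UniqueDiffOn ℝ K) (hU : IsOpen U) (hUK : U ⊆ K) :
    IntegrableOn (fun p => |px u p| ^ 2 + |py u p| ^ 2) U := by
  have hux := (hu.fderivWithin_apply (m := 0) hKd (by norm_num) (1, 0)).continuousOn
  have huy := (hu.fderivWithin_apply (m := 0) hKd (by norm_num) (0, 1)).continuousOn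
  refine ContinuousOn.integrableOn_of_eqOn
    (g := fun p => |fderivWithin ℝ u K p (1, 0)| ^ 2 + |fderivWithin ℝ u K p (0, 1)| ^ 2)
    ((hux.abs.pow 2).add (huy.abs.pow 2)) hK hU.measurableSet hUK fun p hp => ?_
  simp only [px, py, fderivWithin_apply_eqOn hU hUK _ hp]

theorem ContDiffOn.integrableOn_mul_lap (hu : ContDiffOn ℝ 2 u K) (hK : IsCompact K)
    (hKd : UniqueDiffOn ℝ K) (hU : IsOpen U) (hUK : U ⊆ K) :
    IntegrableOn (fun p => u p * lap u p) U := by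
  have hux := hu.fderivWithin_apply (m := 1) hKd (by norm_num) (1, 0)
  have huy := hu.fderivWithin_apply (m := 1) hKd (by norm_num) (0, 1)
  refine (hu.continuousOn.mul (((hux.fderivWithin_apply (m := 0) hKd (by norm_num) (1, 0)).add
    (huy.fderivWithin_apply (m := 0) hKd (by norm_num) (0, 1))).continuousOn)).integrableOn_of_eqOn
    hK hU.measurableSet hUK fun p hp => congrArg (u p * ·) (congrArg₂ (· + ·)
      (fderivWithin_apply_fderivWithin_apply_eqOn hU hUK _ _ hp)
      (fderivWithin_apply_fderivWithin_apply_eqOn hU hUK _ _ hp))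

end IntegrableOn

section Rectangle

variable {a₁ b₁ a₂ b₂ : ℝ}

theorem integral_px_add_py_eq_zero (hab₁ : a₁ ≤ b₁) (hab₂ : a₂ ≤ b₂) {F G : ℝ × ℝ → ℝ}
    (hFc : ContinuousOn F (Icc a₁ b₁ ×ˢ Icc a₂ b₂)) (hGc : ContinuousOn G (Icc a₁ b₁ ×ˢ Icc a₂ b₂))
    (hFd : ∀ p ∈ Ioo a₁ b₁ ×ˢ Ioo a₂ b₂, DifferentiableAt ℝ F p)
    (hGd : ∀ p ∈ Ioo a₁ b₁ ×ˢ Ioo a₂ b₂, DifferentiableAt ℝ G p)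
    (hi : IntegrableOn (fun p => px F p + py G p) (Ioo a₁ b₁ ×ˢ Ioo a₂ b₂))
    (hF0 : ∀ p ∈ Icc a₁ b₁ ×ˢ Icc a₂ b₂ \ Ioo a₁ b₁ ×ˢ Ioo a₂ b₂, F p = 0)
    (hG0 : ∀ p ∈ Icc a₁ b₁ ×ˢ Icc a₂ b₂ \ Ioo a₁ b₁ ×ˢ Ioo a₂ b₂, G p = 0) :
    ∫ p in Ioo a₁ b₁ ×ˢ Ioo a₂ b₂, (px F p + py G p) = 0 := by
  have hae : (Ioo a₁ b₁ ×ˢ Ioo a₂ b₂ : Set (ℝ × ℝ)) =ᵐ[volume] Icc (a₁, a₂) (b₁, b₂) := by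
    rw [Icc_prod_eq, Measure.volume_eq_prod]
    exact Measure.set_prod_ae_eq Ioo_ae_eq_Icc Ioo_ae_eq_Icc
  have hG_edge : ∀ y ∈ ({a₂, b₂} : Set ℝ), ∀ x ∈ uIcc a₁ b₁, G (x, y) = 0 := by
    intro y hy x hx
    rw [uIcc_of_le hab₁] at hx
    refine hG0 _ ⟨⟨hx, ?_⟩, fun h => ?_⟩ <;> rcases hy with rfl | rfl
    exacts [left_mem_Icc.2 hab₂, right_mem_Icc.2 hab₂, h.2.1.false, h.2.2.false]
  have hF_edge : ∀ x ∈ ({a₁, b₁} : Set ℝ), ∀ y ∈ uIcc a₂ b₂, F (x, y) = 0 := by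
    intro x hx y hy
    rw [uIcc_of_le hab₂] at hy
    refine hF0 _ ⟨⟨?_, hy⟩, fun h => ?_⟩ <;> rcases hx with rfl | rfl
    exacts [left_mem_Icc.2 hab₁, right_mem_Icc.2 hab₁, h.1.1.false, h.1.2.false]
  rw [setIntegral_congr_set hae]
  refine (integral_divergence_prod_Icc_of_hasFDerivAt_off_countable_of_le F G (fderiv ℝ F)
    (fderiv ℝ G) (a₁, a₂) (b₁, b₂) ⟨hab₁, hab₂⟩ ∅ countable_empty
    (by rwa [Icc_prod_eq]) (by rwa [Icc_prod_eq])
    (fun p hp => (hFd p hp.1).hasFDerivAt) (fun p hp => (hGd p hp.1).hasFDerivAt)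
    (hi.congr_set_ae hae.symm)).trans ?_
  rw [intervalIntegral.integral_congr (hG_edge b₂ (by simp)),
    intervalIntegral.integral_congr (hG_edge a₂ (by simp)),
    intervalIntegral.integral_congr (hF_edge b₁ (by simp)),
    intervalIntegral.integral_congr (hF_edge a₁ (by simp))]
  simp

theorem integral_sq_px_add_sq_py_eq_neg_integral_mul_lap (hab₁ : a₁ < b₁) (hab₂ : a₂ < b₂)
    {u : ℝ × ℝ → ℝ} (hu : ContDiffOn ℝ 2 u (Icc a₁ b₁ ×ˢ Icc a₂ b₂))
    (hu0 : ∀ p ∈ Icc a₁ b₁ ×ˢ Icc a₂ b₂ \ Ioo a₁ b₁ ×ˢ Ioo a₂ b₂, u p = 0) :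
    ∫ p in Ioo a₁ b₁ ×ˢ Ioo a₂ b₂, (|px u p| ^ 2 + |py u p| ^ 2)
      = -∫ p in Ioo a₁ b₁ ×ˢ Ioo a₂ b₂, u p * lap u p := by
  set K := Icc a₁ b₁ ×ˢ Icc a₂ b₂
  set U := Ioo a₁ b₁ ×ˢ Ioo a₂ b₂
  have hK : IsCompact K := isCompact_Icc.prod isCompact_Icc
  have hKd : UniqueDiffOn ℝ K := (uniqueDiffOn_Icc hab₁).prod (uniqueDiffOn_Icc hab₂)
  have hU : IsOpen U := isOpen_Ioo.prod isOpen_Ioo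
  have hUK : U ⊆ K := prod_mono Ioo_subset_Icc_self Ioo_subset_Icc_self
  have hKp : ∀ p ∈ U, K ∈ 𝓝 p := fun p hp => mem_of_superset (hU.mem_nhds hp) hUK
  have hu_at : ∀ p ∈ U, ContDiffAt ℝ 2 u p := fun p hp => hu.contDiffAt (hKp p hp)
  have hgrad_int := hu.integrableOn_sq_px_add_sq_py hK hKd hU hUK
  have hlap_int := hu.integrableOn_mul_lap hK hKd hU hUK
  -- The field is `u ∇u`, but `px u` need not extend continuously to `K` (`fderiv` is junk on
  -- the boundary), so the divergence theorem is applied with derivatives within `K`.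
  set ux := fun p => fderivWithin ℝ u K p (1, 0)
  set uy := fun p => fderivWithin ℝ u K p (0, 1)
  have hux : ContDiffOn ℝ 1 ux K := hu.fderivWithin_apply hKd (by norm_num) _
  have huy : ContDiffOn ℝ 1 uy K := hu.fderivWithin_apply hKd (by norm_num) _
  have hdiv : ∀ p ∈ U, px (fun q => u q * ux q) p + py (fun q => u q * uy q) p
      = (|px u p| ^ 2 + |py u p| ^ 2) + u p * lap u p := fun p hp => by
    have hx : (fun q => u q * ux q) =ᶠ[𝓝 p] fun q => u q * px u q :=
      eventually_of_mem (hU.mem_nhds hp) fun q hq => by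
        simp only [ux, fderivWithin_apply_eqOn hU hUK _ hq, px]
    have hy : (fun q => u q * uy q) =ᶠ[𝓝 p] fun q => u q * py u q :=
      eventually_of_mem (hU.mem_nhds hp) fun q hq => by
        simp only [uy, fderivWithin_apply_eqOn hU hUK _ hq, py]
    have hud := (hu_at p hp).differentiableAt two_ne_zero
    rw [hx.px_eq, hy.py_eq, px_mul hud (hu_at p hp).differentiableAt_px,
      py_mul hud (hu_at p hp).differentiableAt_py, lap, sq_abs, sq_abs]
    ring
  have hu₁ : ContDiffOn ℝ 1 u K := hu.of_le one_le_two
  have hzero := integral_px_add_py_eq_zero (F := fun q => u q * ux q) (G := fun q => u q * uy q)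
    hab₁.le hab₂.le (hu.continuousOn.mul hux.continuousOn) (hu.continuousOn.mul huy.continuousOn)
    (fun p hp => ((hu₁.mul hux).contDiffAt (hKp p hp)).differentiableAt one_ne_zero)
    (fun p hp => ((hu₁.mul huy).contDiffAt (hKp p hp)).differentiableAt one_ne_zero)
    ((hgrad_int.add hlap_int).congr_fun (fun p hp => (hdiv p hp).symm) hU.measurableSet)
    (fun p hp => by simp [hu0 p hp]) (fun p hp => by simp [hu0 p hp])
  rw [setIntegral_congr_fun hU.measurableSet hdiv, integral_add hgrad_int hlap_int] at hzero
  linarith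

end Rectangle

theorem isOpen_Omg : IsOpen Omg := isOpen_Ioo.prod isOpen_Ioo

theorem gradNorm_sq (u : ℝ × ℝ → ℝ) :
    gradNorm u ^ 2 = ∫ p in Omg, (|px u p| ^ 2 + |py u p| ^ 2) := by
  have hnn : 0 ≤ ∫ p in Omg, (|px u p| ^ 2 + |py u p| ^ 2) :=
    setIntegral_nonneg isOpen_Omg.measurableSet fun p _ => by positivity
  rw [gradNorm, ← Real.rpow_natCast, ← Real.rpow_mul hnn]
  norm_num

theorem integral_sq_px_add_sq_py_Omg {u : ℝ × ℝ → ℝ} (hu : ContDiffOn ℝ 2 u (closure Omg))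
    (hu0 : ∀ p ∈ frontier Omg, u p = 0) :
    ∫ p in Omg, (|px u p| ^ 2 + |py u p| ^ 2) = -∫ p in Omg, u p * lap u p := by
  have hcl : closure Omg = Icc 0 1 ×ˢ Icc 0 1 := by
    rw [Omg, closure_prod_eq, closure_Ioo zero_ne_one]
  have hfr : frontier Omg = Icc 0 1 ×ˢ Icc 0 1 \ Ioo 0 1 ×ˢ Ioo 0 1 := by
    rw [isOpen_Omg.frontier_eq, hcl, Omg]
  exact integral_sq_px_add_sq_py_eq_neg_integral_mul_lap one_pos one_pos (hcl ▸ hu)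
    fun p hp => hu0 p (hfr ▸ hp)

theorem stmt_6_general (Ra : ℝ) (f₁ f₂ : ℝ × ℝ → ℝ)
    (ψ₁ θ₁ ψ₂ θ₂ : ℝ × ℝ → ℝ)
    (hψ₁ : ContDiffOn ℝ 2 ψ₁ (closure Omg)) (hθ₁ : ContDiffOn ℝ 2 θ₁ (closure Omg))
    (hψ₂ : ContDiffOn ℝ 2 ψ₂ (closure Omg)) (hθ₂ : ContDiffOn ℝ 2 θ₂ (closure Omg))
    (hψ₁b : ∀ p ∈ frontier Omg, ψ₁ p = 0) (hθ₁b : ∀ p ∈ frontier Omg, θ₁ p = 0)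
    (hψ₂b : ∀ p ∈ frontier Omg, ψ₂ p = 0) (hθ₂b : ∀ p ∈ frontier Omg, θ₂ p = 0)
    (heq1₁ : ∀ p ∈ Omg, -(lap ψ₁ p) - Ra * px θ₁ p = f₁ p)
    (heq2₁ : ∀ p ∈ Omg, Jac ψ₁ θ₁ p = lap θ₁ p + f₂ p)
    (heq1₂ : ∀ p ∈ Omg, -(lap ψ₂ p) - Ra * px θ₂ p = f₁ p)
    (heq2₂ : ∀ p ∈ Omg, Jac ψ₂ θ₂ p = lap θ₂ p + f₂ p) :
    gradNorm (fun p => ψ₁ p - ψ₂ p) ^ 2 + gradNorm (fun p => θ₁ p - θ₂ p) ^ 2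
      - Ra * (∫ p in Omg, px (fun q => θ₁ q - θ₂ q) p * (ψ₁ p - ψ₂ p))
      + (∫ p in Omg, (Jac ψ₁ θ₁ p - Jac ψ₂ θ₂ p) * (θ₁ p - θ₂ p)) = 0 := by
  have hC2 {f : ℝ × ℝ → ℝ} (hf : ContDiffOn ℝ 2 f (closure Omg)) {p} (hp : p ∈ Omg) :
      ContDiffAt ℝ 2 f p :=
    hf.contDiffAt (mem_of_superset (isOpen_Omg.mem_nhds hp) subset_closure)
  have hψ_lap : ∫ p in Omg, (ψ₁ p - ψ₂ p) * lap (fun q => ψ₁ q - ψ₂ q) p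
      = ∫ p in Omg, -Ra * (px (fun q => θ₁ q - θ₂ q) p * (ψ₁ p - ψ₂ p)) := by
    refine setIntegral_congr_fun isOpen_Omg.measurableSet fun p hp => ?_
    rw [lap_sub (hC2 hψ₁ hp) (hC2 hψ₂ hp),
      px_sub ((hC2 hθ₁ hp).differentiableAt two_ne_zero)
        ((hC2 hθ₂ hp).differentiableAt two_ne_zero)]
    linear_combination (-(ψ₁ p - ψ₂ p)) * (heq1₁ p hp - heq1₂ p hp)
  have hθ_lap : ∫ p in Omg, (θ₁ p - θ₂ p) * lap (fun q => θ₁ q - θ₂ q) p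
      = ∫ p in Omg, (Jac ψ₁ θ₁ p - Jac ψ₂ θ₂ p) * (θ₁ p - θ₂ p) := by
    refine setIntegral_congr_fun isOpen_Omg.measurableSet fun p hp => ?_
    rw [lap_sub (hC2 hθ₁ hp) (hC2 hθ₂ hp)]
    linear_combination (-(θ₁ p - θ₂ p)) * (heq2₁ p hp - heq2₂ p hp)
  rw [gradNorm_sq, gradNorm_sq,
    integral_sq_px_add_sq_py_Omg (hψ₁.sub hψ₂) fun p hp => by simp [hψ₁b p hp, hψ₂b p hp],
    integral_sq_px_add_sq_py_Omg (hθ₁.sub hθ₂) fun p hp => by simp [hθ₁b p hp, hθ₂b p hp],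
    hψ_lap, hθ_lap, integral_const_mul]
  ring

/-- Energy identity (3) for the difference of two classical solutions. -/
theorem stmt_6 (Ra : ℝ) (hRa : 0 < Ra) (f₁ f₂ : ℝ × ℝ → ℝ)
    (hf₁ : ContinuousOn f₁ (closure Omg)) (hf₂ : ContinuousOn f₂ (closure Omg))
    (ψ₁ θ₁ ψ₂ θ₂ : ℝ × ℝ → ℝ)
    (hψ₁ : ContDiffOn ℝ 2 ψ₁ (closure Omg)) (hθ₁ : ContDiffOn ℝ 2 θ₁ (closure Omg))
    (hψ₂ : ContDiffOn ℝ 2 ψ₂ (closure Omg)) (hθ₂ : ContDiffOn ℝ 2 θ₂ (closure Omg))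
    (hψ₁b : ∀ p ∈ frontier Omg, ψ₁ p = 0) (hθ₁b : ∀ p ∈ frontier Omg, θ₁ p = 0)
    (hψ₂b : ∀ p ∈ frontier Omg, ψ₂ p = 0) (hθ₂b : ∀ p ∈ frontier Omg, θ₂ p = 0)
    (heq1₁ : ∀ p ∈ Omg, -(lap ψ₁ p) - Ra * px θ₁ p = f₁ p)
    (heq2₁ : ∀ p ∈ Omg, Jac ψ₁ θ₁ p = lap θ₁ p + f₂ p)
    (heq1₂ : ∀ p ∈ Omg, -(lap ψ₂ p) - Ra * px θ₂ p = f₁ p)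
    (heq2₂ : ∀ p ∈ Omg, Jac ψ₂ θ₂ p = lap θ₂ p + f₂ p) :
    gradNorm (fun p => ψ₁ p - ψ₂ p) ^ 2 + gradNorm (fun p => θ₁ p - θ₂ p) ^ 2
      - Ra * (∫ p in Omg, px (fun q => θ₁ q - θ₂ q) p * (ψ₁ p - ψ₂ p))
      + (∫ p in Omg, (Jac ψ₁ θ₁ p - Jac ψ₂ θ₂ p) * (θ₁ p - θ₂ p)) = 0 :=
  stmt_6_general Ra f₁ f₂ ψ₁ θ₁ ψ₂ θ₂ hψ₁ hθ₁ hψ₂ hθ₂ hψ₁b hθ₁b hψ₂b hθ₂b heq1₁ heq2₁ heq1₂ heq2₂
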